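/- Let C ⊆ 𝔽₂^n be a binary linear code and i ≠ j two coordinates. For every z ∈ {0,1}^n, if C^{ij}_{01}(z) ≠ ∅ and C^{ij}_{10}(z) ≠ ∅ then C^{ij}_{11}(z) ≠ ∅, and likewise for any two of the three sets C^{ij}_{01}(z), C^{ij}_{10}(z), C^{ij}_{11}(z) being nonempty the third is nonempty. Consequently, the five sets B_1^{ij}, B_2^{ij}, B_3^{ij}, B_4^{ij}, B_5^{ij} form a partition of {0,1}^n. -/

import Mathlib

open scoped Classical
open Finset

noncomputable section

/-- Vectors in 𝔽₂^n (codewords and binary patterns). -/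
abbrev Pattern (n : ℕ) := Fin n → ZMod 2

/-- `z` covers `x` if the support of `x` is contained in the support of `z`. -/
def covers {n : ℕ} (z x : Pattern n) : Prop := ∀ k, x k ≠ 0 → z k ≠ 0

/-- C^{ij}_{ab}(z): codewords c ∈ C with (c_i, c_j) = (a, b) covered by z. -/
def Cab {n : ℕ} (C : Submodule (ZMod 2) (Pattern n)) (i j : Fin n) (a b : ZMod 2)
    (z : Pattern n) : Set (Pattern n) :=
  {c | c ∈ C ∧ c i = a ∧ c j = b ∧ covers z c}

def B1 {n : ℕ} (C : Submodule (ZMod 2) (Pattern n)) (i j : Fin n) : Set (Pattern n) :=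
  {z | Cab C i j 0 1 z = ∅ ∧ Cab C i j 1 0 z = ∅ ∧ Cab C i j 1 1 z = ∅}

def B2 {n : ℕ} (C : Submodule (ZMod 2) (Pattern n)) (i j : Fin n) : Set (Pattern n) :=
  {z | Cab C i j 0 1 z ≠ ∅ ∧ Cab C i j 1 0 z = ∅ ∧ Cab C i j 1 1 z = ∅}

def B3 {n : ℕ} (C : Submodule (ZMod 2) (Pattern n)) (i j : Fin n) : Set (Pattern n) :=
  {z | Cab C i j 1 0 z ≠ ∅ ∧ Cab C i j 0 1 z = ∅ ∧ Cab C i j 1 1 z = ∅}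

def B4 {n : ℕ} (C : Submodule (ZMod 2) (Pattern n)) (i j : Fin n) : Set (Pattern n) :=
  {z | Cab C i j 1 1 z ≠ ∅ ∧ Cab C i j 0 1 z = ∅ ∧ Cab C i j 1 0 z = ∅}

def B5 {n : ℕ} (C : Submodule (ZMod 2) (Pattern n)) (i j : Fin n) : Set (Pattern n) :=
  {z | Cab C i j 0 1 z ≠ ∅ ∧ Cab C i j 1 0 z ≠ ∅ ∧ Cab C i j 1 1 z ≠ ∅}

lemma covers_add {n : ℕ} {z c d : Pattern n} (hc : covers z c) (hd : covers z d) :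
    covers z (c + d) := by
  intro k hk
  by_cases hck : c k = 0
  · exact hd k (by simpa [hck] using hk)
  · exact hc k hck

lemma add_mem_Cab {n : ℕ} {C : Submodule (ZMod 2) (Pattern n)} {i j : Fin n}
    {a b a' b' : ZMod 2} {z c d : Pattern n}
    (hc : c ∈ Cab C i j a b z) (hd : d ∈ Cab C i j a' b' z) :
    c + d ∈ Cab C i j (a + a') (b + b') z := by
  obtain ⟨hcC, rfl, rfl, hcz⟩ := hc
  obtain ⟨hdC, rfl, rfl, hdz⟩ := hd
  exact ⟨C.add_mem hcC hdC, rfl, rfl, covers_add hcz hdz⟩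

lemma Cab_nonempty_add {n : ℕ} {C : Submodule (ZMod 2) (Pattern n)} {i j : Fin n}
    {a b a' b' : ZMod 2} {z : Pattern n}
    (h : (Cab C i j a b z).Nonempty) (h' : (Cab C i j a' b' z).Nonempty) :
    (Cab C i j (a + a') (b + b') z).Nonempty :=
  let ⟨c, hc⟩ := h
  let ⟨d, hd⟩ := h'
  ⟨c + d, add_mem_Cab hc hd⟩

-- In characteristic 2 the three nonzero patterns (0,1), (1,0), (1,1) sum pairwise to the third.
lemma Cab_ne_empty_of_two {n : ℕ} (C : Submodule (ZMod 2) (Pattern n)) (i j : Fin n)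
    (z : Pattern n) :
    (Cab C i j 0 1 z ≠ ∅ → Cab C i j 1 0 z ≠ ∅ → Cab C i j 1 1 z ≠ ∅) ∧
    (Cab C i j 0 1 z ≠ ∅ → Cab C i j 1 1 z ≠ ∅ → Cab C i j 1 0 z ≠ ∅) ∧
    (Cab C i j 1 0 z ≠ ∅ → Cab C i j 1 1 z ≠ ∅ → Cab C i j 0 1 z ≠ ∅) := by
  simp only [← Set.nonempty_iff_ne_empty]
  have two : (1 + 1 : ZMod 2) = 0 := rfl
  exact ⟨fun h h' => by simpa using Cab_nonempty_add h h',
    fun h h' => by simpa [two] using Cab_nonempty_add h h',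
    fun h h' => by simpa [two] using Cab_nonempty_add h h'⟩

lemma existsUnique_emptiness_pattern {α : Type*} {P Q R : Set α}
    (hPQ : P ≠ ∅ → Q ≠ ∅ → R ≠ ∅) (hPR : P ≠ ∅ → R ≠ ∅ → Q ≠ ∅)
    (hQR : Q ≠ ∅ → R ≠ ∅ → P ≠ ∅) :
    ∃! k : Fin 5, ![P = ∅ ∧ Q = ∅ ∧ R = ∅, P ≠ ∅ ∧ Q = ∅ ∧ R = ∅, Q ≠ ∅ ∧ P = ∅ ∧ R = ∅,
      R ≠ ∅ ∧ P = ∅ ∧ Q = ∅, P ≠ ∅ ∧ Q ≠ ∅ ∧ R ≠ ∅] k := by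
  by_cases hP : P = ∅ <;> by_cases hQ : Q = ∅ <;> by_cases hR : R = ∅ <;>
    simp_all [ExistsUnique, Fin.forall_fin_succ]

theorem Bsets_partition_general (n : ℕ) (C : Submodule (ZMod 2) (Pattern n))
    (i j : Fin n) :
    (∀ z : Pattern n,
      (Cab C i j 0 1 z ≠ ∅ → Cab C i j 1 0 z ≠ ∅ → Cab C i j 1 1 z ≠ ∅) ∧
      (Cab C i j 0 1 z ≠ ∅ → Cab C i j 1 1 z ≠ ∅ → Cab C i j 1 0 z ≠ ∅) ∧
      (Cab C i j 1 0 z ≠ ∅ → Cab C i j 1 1 z ≠ ∅ → Cab C i j 0 1 z ≠ ∅)) ∧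
    (∀ z : Pattern n,
      ∃! k : Fin 5, z ∈ ![B1 C i j, B2 C i j, B3 C i j, B4 C i j, B5 C i j] k) := by
  refine ⟨Cab_ne_empty_of_two C i j, fun z => ?_⟩
  obtain ⟨h₁, h₂, h₃⟩ := Cab_ne_empty_of_two C i j z
  refine (existsUnique_congr fun k => ?_).mpr (existsUnique_emptiness_pattern h₁ h₂ h₃)
  fin_cases k <;> rfl

theorem Bsets_partition (n : ℕ) (C : Submodule (ZMod 2) (Pattern n))
    (i j : Fin n) (hij : i ≠ j) :
    (∀ z : Pattern n,
      (Cab C i j 0 1 z ≠ ∅ → Cab C i j 1 0 z ≠ ∅ → Cab C i j 1 1 z ≠ ∅) ∧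
      (Cab C i j 0 1 z ≠ ∅ → Cab C i j 1 1 z ≠ ∅ → Cab C i j 1 0 z ≠ ∅) ∧
      (Cab C i j 1 0 z ≠ ∅ → Cab C i j 1 1 z ≠ ∅ → Cab C i j 0 1 z ≠ ∅)) ∧
    (∀ z : Pattern n,
      ∃! k : Fin 5, z ∈ ![B1 C i j, B2 C i j, B3 C i j, B4 C i j, B5 C i j] k) :=
  Bsets_partition_general n C i j

end
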